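/- arXiv:1108.6013 — 8 statements merged into one kernel-verified Lean document; each statement's English description precedes it below -/
import Mathlib

section
/- The curvature set L̃²_m = {(A,A,B) ∈ Π_m : B^i_{jk} + B^i_{kj} = 0 for all i,j,k} is a subgroup of Π_m: it contains the identity, is closed under multiplication, and is closed under inversion. -/
/-! When `P = A`, the `B`-component of `(A₁,A₁,B₁)·(A₂,A₂,B₂)` is `B₁` with both lower indices
transformed by `A₂`, plus `B₂` with its upper index transformed by `A₁`; that of `(A,A,B)⁻¹` is
`B` with its lower indices transformed by `A⁻¹` and its upper index by `-A⁻¹`. Transforming the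
upper index, or both lower indices by the same matrix, preserves skew-symmetry in the lower
indices. -/

open Matrix BigOperators

noncomputable section

/-- Square m×m real matrices. -/
abbrev Mat (m : ℕ) := Matrix (Fin m) (Fin m) ℝ

/-- Arrays B^i_{jk} of real numbers. -/
abbrev Arr (m : ℕ) := Fin m → Fin m → Fin m → ℝ

/-- Underlying data of an element (P, A, B) of the principal jet group Π_m. -/
abbrev PiEl (m : ℕ) := Mat m × Mat m × Arr m

/-- Membership in Π_m : both matrices P and A are invertible. -/
def inPi {m : ℕ} (x : PiEl m) : Prop := IsUnit x.1 ∧ IsUnit x.2.1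

/-- The multiplication of Π_m :
`(P₁,A₁,B₁)·(P₂,A₂,B₂) = (P₁P₂, A₁A₂, B₃)` with
`B₃^i_{jk} = Σ_{h,l} B₁^i_{hl} A₂^h_j P₂^l_k + Σ_h A₁^i_h B₂^h_{jk}`. -/
def piMul {m : ℕ} (x y : PiEl m) : PiEl m :=
  (x.1 * y.1, x.2.1 * y.2.1,
    fun i j k => (∑ h, ∑ l, x.2.2 i h l * y.2.1 h j * y.1 l k) + ∑ h, x.2.1 i h * y.2.2 h j k)

/-- The identity element (I, I, 0) of Π_m. -/
def piOne (m : ℕ) : PiEl m := (1, 1, fun _ _ _ => 0)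

/-- The inverse (P⁻¹, A⁻¹, B⁻) with
`B⁻^i_{jk} = − Σ_{h,p,l} (A⁻¹)^i_h B^h_{pl} (A⁻¹)^p_j (P⁻¹)^l_k`. -/
def piInv {m : ℕ} (x : PiEl m) : PiEl m :=
  (x.1⁻¹, x.2.1⁻¹,
    fun i j k => -∑ h, ∑ p, ∑ l, x.2.1⁻¹ i h * x.2.2 h p l * x.2.1⁻¹ p j * x.1⁻¹ l k)

/-- Curvature condition: P = A and B^i_{jk} + B^i_{kj} = 0. -/
def curvEl {m : ℕ} (x : PiEl m) : Prop :=
  x.1 = x.2.1 ∧ ∀ i j k, x.2.2 i j k + x.2.2 i k j = 0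

section SkewLastTwo

variable {ι ι' κ κ' R : Type*} [CommRing R]

def IsSkewLastTwo (B : ι → κ → κ → R) : Prop :=
  ∀ i j k, B i j k + B i k j = 0

def mapLower [Fintype κ] (B : ι → κ → κ → R) (A : Matrix κ κ' R) : ι → κ' → κ' → R :=
  fun i j k => ∑ h, ∑ l, B i h l * A h j * A l k

def mapUpper [Fintype ι] (M : Matrix ι' ι R) (B : ι → κ → κ → R) : ι' → κ → κ → R :=
  fun i j k => ∑ h, M i h * B h j k

namespace IsSkewLastTwo

variable {B C : ι → κ → κ → R}

theorem add (hB : IsSkewLastTwo B) (hC : IsSkewLastTwo C) : IsSkewLastTwo (B + C) :=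
  fun i j k => by
    simp only [Pi.add_apply]
    linear_combination hB i j k + hC i j k

theorem neg (hB : IsSkewLastTwo B) : IsSkewLastTwo (-B) :=
  fun i j k => by
    simp only [Pi.neg_apply]
    linear_combination -hB i j k

theorem mapLower [Fintype κ] (hB : IsSkewLastTwo B) (A : Matrix κ κ' R) :
    IsSkewLastTwo (_root_.mapLower B A) := fun i j k => by
  simp only [_root_.mapLower]
  rw [Finset.sum_comm (f := fun h l => B i h l * A h k * A l j), ← Finset.sum_add_distrib]
  refine Finset.sum_eq_zero fun h _ => ?_
  rw [← Finset.sum_add_distrib]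
  exact Finset.sum_eq_zero fun l _ => by linear_combination A h j * A l k * hB i h l

theorem mapUpper [Fintype ι] (hB : IsSkewLastTwo B) (M : Matrix ι' ι R) :
    IsSkewLastTwo (_root_.mapUpper M B) := fun i j k => by
  simp only [_root_.mapUpper, ← Finset.sum_add_distrib, ← mul_add]
  exact Finset.sum_eq_zero fun h _ => by rw [hB h j k, mul_zero]

end IsSkewLastTwo

end SkewLastTwo

theorem piMul_snd_snd {m : ℕ} (x y : PiEl m) (hy : y.1 = y.2.1) :
    (piMul x y).2.2 = mapLower x.2.2 y.2.1 + mapUpper x.2.1 y.2.2 := by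
  obtain ⟨P, A, B⟩ := y
  obtain rfl : P = A := hy
  rfl

theorem piInv_snd_snd {m : ℕ} (x : PiEl m) (hx : x.1 = x.2.1) :
    (piInv x).2.2 = -mapUpper x.2.1⁻¹ (mapLower x.2.2 x.2.1⁻¹) := by
  funext i j k
  simp only [piInv, mapUpper, mapLower, hx, Pi.neg_apply, Finset.mul_sum, mul_assoc]

theorem stmt_5_general (m : ℕ) :
    curvEl (piOne m) ∧
    (∀ x y : PiEl m, inPi x → inPi y → curvEl x → curvEl y → curvEl (piMul x y)) ∧
    (∀ x : PiEl m, inPi x → curvEl x → curvEl (piInv x)) := by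
  refine ⟨⟨rfl, fun _ _ _ => add_zero 0⟩, ?_, ?_⟩
  · rintro x y - - ⟨hx₁, hx₂ : IsSkewLastTwo _⟩ ⟨hy₁, hy₂ : IsSkewLastTwo _⟩
    refine ⟨by simp only [piMul, hx₁, hy₁], ?_⟩
    rw [piMul_snd_snd x y hy₁]
    exact (hx₂.mapLower _).add (hy₂.mapUpper _)
  · rintro x - ⟨hx₁, hx₂ : IsSkewLastTwo _⟩
    refine ⟨by simp only [piInv, hx₁], ?_⟩
    rw [piInv_snd_snd x hx₁]
    exact ((hx₂.mapLower _).mapUpper _).neg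

/-- the curvature set L̃²_m = {(A,A,B) ∈ Π_m : B^i_{jk} + B^i_{kj} = 0}
is a subgroup of Π_m: it contains the identity, is closed under multiplication,
and is closed under inversion. -/
theorem stmt_5 (m : ℕ) (hm : 1 ≤ m) :
    curvEl (piOne m) ∧
    (∀ x y : PiEl m, inPi x → inPi y → curvEl x → curvEl y → curvEl (piMul x y)) ∧
    (∀ x : PiEl m, inPi x → curvEl x → curvEl (piInv x)) :=
  stmt_5_general m
end
end

section
/- The symmetrization map ∨ : L̂²_m → L̄²_m, (A, A, B) ↦ (A, A, B_sym) with B_sym^i_{jk} = (B^i_{jk} + B^i_{kj})/2, is a surjective group homomorphism from the semiholonomic subgroup onto the holonomic subgroup of Π_m, and its kernel is exactly the set {(I, I, B) : B^i_{jk} + B^i_{kj} = 0 for all i,j,k}. -/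
open Matrix BigOperators

noncomputable section

/-- Semiholonomic condition: P = A. -/
def semihEl {m : ℕ} (x : PiEl m) : Prop := x.1 = x.2.1

/-- Holonomic condition: P = A and B^i_{jk} = B^i_{kj}. -/
def holEl {m : ℕ} (x : PiEl m) : Prop :=
  x.1 = x.2.1 ∧ ∀ i j k, x.2.2 i j k = x.2.2 i k j

/-- The symmetrization map ∨ : (A,A,B) ↦ (A,A,B_sym), B_sym^i_{jk} = (B^i_{jk}+B^i_{kj})/2. -/
def symmMap {m : ℕ} (x : PiEl m) : PiEl m :=
  (x.1, x.2.1, fun i j k => (x.2.2 i j k + x.2.2 i k j) / 2)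

variable {m : ℕ}

theorem inPi_symmMap {x : PiEl m} : inPi (symmMap x) ↔ inPi x := Iff.rfl

theorem holEl_symmMap {x : PiEl m} (hx : semihEl x) : holEl (symmMap x) :=
  ⟨hx, fun _ _ _ => by simp only [symmMap, add_comm]⟩

theorem symmMap_eq_self {z : PiEl m} (hz : holEl z) : symmMap z = z := by
  refine Prod.ext rfl (Prod.ext rfl ?_)
  funext i j k
  simp only [symmMap, hz.2 i k j, add_self_div_two]

/-- `P₂ = A₂` is what lets the swap `j ↔ k` in the first term of `B₃` be absorbed by renaming
the summation indices `h ↔ l`. -/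
theorem symmMap_piMul (x : PiEl m) {y : PiEl m} (hy : semihEl y) :
    symmMap (piMul x y) = piMul (symmMap x) (symmMap y) := by
  unfold semihEl at hy
  refine Prod.ext rfl (Prod.ext rfl ?_)
  funext i j k
  have hswap : ∑ h, ∑ l, x.2.2 i h l * y.2.1 h k * y.2.1 l j
      = ∑ h, ∑ l, x.2.2 i l h * y.2.1 h j * y.2.1 l k := by
    rw [Finset.sum_comm]
    exact Finset.sum_congr rfl fun _ _ => Finset.sum_congr rfl fun _ _ => by ring
  simp only [symmMap, piMul, hy, hswap]
  simp only [add_mul, add_div, mul_add, mul_div_assoc', div_mul_eq_mul_div, Finset.sum_add_distrib,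
    ← Finset.sum_div]
  ring

theorem symmMap_eq_piOne_iff {x : PiEl m} :
    symmMap x = piOne m ↔ x.1 = 1 ∧ x.2.1 = 1 ∧ ∀ i j k, x.2.2 i j k + x.2.2 i k j = 0 := by
  simp only [symmMap, piOne, Prod.ext_iff, funext_iff, div_eq_zero_iff, two_ne_zero, or_false]

theorem stmt_6_general (m : ℕ) :
    (∀ x : PiEl m, inPi x → semihEl x → inPi (symmMap x) ∧ holEl (symmMap x)) ∧
    (∀ x y : PiEl m, inPi x → inPi y → semihEl x → semihEl y →
      symmMap (piMul x y) = piMul (symmMap x) (symmMap y)) ∧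
    (∀ z : PiEl m, inPi z → holEl z →
      ∃ x : PiEl m, inPi x ∧ semihEl x ∧ symmMap x = z) ∧
    (∀ x : PiEl m, inPi x → semihEl x →
      (symmMap x = piOne m ↔
        (x.1 = 1 ∧ x.2.1 = 1 ∧ ∀ i j k, x.2.2 i j k + x.2.2 i k j = 0))) :=
  ⟨fun _ hx hs => ⟨inPi_symmMap.2 hx, holEl_symmMap hs⟩,
    fun x _ _ _ _ hy => symmMap_piMul x hy,
    fun z hz hhol => ⟨z, hz, hhol.1, symmMap_eq_self hhol⟩,
    fun _ _ _ => symmMap_eq_piOne_iff⟩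

/-- the symmetrization map ∨ : L̂²_m → L̄²_m is a surjective group
homomorphism from the semiholonomic subgroup onto the holonomic subgroup of Π_m,
whose kernel is exactly {(I,I,B) : B^i_{jk} + B^i_{kj} = 0}. -/
theorem stmt_6 (m : ℕ) (hm : 1 ≤ m) :
    (∀ x : PiEl m, inPi x → semihEl x → inPi (symmMap x) ∧ holEl (symmMap x)) ∧
    (∀ x y : PiEl m, inPi x → inPi y → semihEl x → semihEl y →
      symmMap (piMul x y) = piMul (symmMap x) (symmMap y)) ∧
    (∀ z : PiEl m, inPi z → holEl z →
      ∃ x : PiEl m, inPi x ∧ semihEl x ∧ symmMap x = z) ∧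
    (∀ x : PiEl m, inPi x → semihEl x →
      (symmMap x = piOne m ↔
        (x.1 = 1 ∧ x.2.1 = 1 ∧ ∀ i j k, x.2.2 i j k + x.2.2 i k j = 0))) :=
  stmt_6_general m
end
end

section
/- The exchange map e(P,A,B) = (A, P, Bᵀ) with Bᵀ{}^i_{jk} = B^i_{kj} restricts to a group automorphism of the semiholonomic subgroup L̂²_m of order two, and its fixed-point set in L̂²_m is exactly the holonomic subgroup L̄²_m. -/
open Matrix BigOperators

noncomputable section

/-- The exchange map e(P,A,B) = (A, P, Bᵀ) with Bᵀ{}^i_{jk} = B^i_{kj}. -/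
def exch {m : ℕ} (x : PiEl m) : PiEl m :=
  (x.2.1, x.1, fun i j k => x.2.2 i k j)

theorem exch_exch {m : ℕ} (x : PiEl m) : exch (exch x) = x := rfl

theorem inPi_exch {m : ℕ} {x : PiEl m} (hx : inPi x) : inPi (exch x) := ⟨hx.2, hx.1⟩

theorem semihEl_exch {m : ℕ} {x : PiEl m} (hx : semihEl x) : semihEl (exch x) := hx.symm

theorem exch_eq_self_iff {m : ℕ} (x : PiEl m) : exch x = x ↔ holEl x := by
  obtain ⟨P, A, B⟩ := x
  simp only [exch, holEl, Prod.mk.injEq, funext_iff]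
  constructor
  · rintro ⟨hAP, -, hB⟩
    exact ⟨hAP.symm, fun i j k => (hB i j k).symm⟩
  · rintro ⟨hPA, hB⟩
    exact ⟨hPA.symm, hPA, fun i j k => (hB i j k).symm⟩

/-- Swapping the two summation indices matches the quadratic terms for arbitrary factors;
the linear terms `A₁ B₂ᵀ` and `P₁ B₂ᵀ` agree because `P₁ = A₁`. -/
theorem exch_piMul {m : ℕ} {x : PiEl m} (hx : semihEl x) (y : PiEl m) :
    exch (piMul x y) = piMul (exch x) (exch y) := by
  obtain ⟨P₁, A₁, B₁⟩ := x
  obtain ⟨P₂, A₂, B₂⟩ := y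
  change P₁ = A₁ at hx
  subst hx
  simp only [exch, piMul, Prod.mk.injEq, true_and]
  funext i j k
  rw [Finset.sum_comm]
  congr 1
  exact Finset.sum_congr rfl fun h _ => Finset.sum_congr rfl fun l _ => by ring

theorem stmt_7_general (m : ℕ) :
    (∀ x : PiEl m, inPi x → semihEl x → inPi (exch x) ∧ semihEl (exch x)) ∧
    (∀ x y : PiEl m, inPi x → inPi y → semihEl x → semihEl y →
      exch (piMul x y) = piMul (exch x) (exch y)) ∧
    (∀ x : PiEl m, inPi x → semihEl x → exch (exch x) = x) ∧
    (∀ x : PiEl m, inPi x → semihEl x → (exch x = x ↔ holEl x)) :=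
  ⟨fun _ hx hs => ⟨inPi_exch hx, semihEl_exch hs⟩,
    fun _ y _ _ hs _ => exch_piMul hs y,
    fun x _ _ => exch_exch x,
    fun x _ _ => exch_eq_self_iff x⟩

/-- the exchange map restricts to a group automorphism of the
semiholonomic subgroup L̂²_m of order two (it preserves L̂²_m ⊂ Π_m, is a
homomorphism there, and squares to the identity), and its fixed-point set in
L̂²_m is exactly the holonomic subgroup L̄²_m. -/
theorem stmt_7 (m : ℕ) (hm : 1 ≤ m) :
    (∀ x : PiEl m, inPi x → semihEl x → inPi (exch x) ∧ semihEl (exch x)) ∧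
    (∀ x y : PiEl m, inPi x → inPi y → semihEl x → semihEl y →
      exch (piMul x y) = piMul (exch x) (exch y)) ∧
    (∀ x : PiEl m, inPi x → semihEl x → exch (exch x) = x) ∧
    (∀ x : PiEl m, inPi x → semihEl x → (exch x = x ↔ holEl x)) :=
  stmt_7_general m
end
end

section
/- The curvature subgroup L̃²_m is the internal semidirect product of the subgroup G₀ = {(A,A,0) : A an invertible m×m real matrix} and the subgroup N = {(I,I,B) : B^i_{jk} + B^i_{kj} = 0}: N is a normal subgroup of L̃²_m, G₀ ∩ N is trivial, and every element of L̃²_m can be written (uniquely) as a product g₀ · n with g₀ ∈ G₀ and n ∈ N. -/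
/-! The curvature subgroup is closed under products and inverses because its lower indices are
only ever transformed by the same matrix `A` in both slots (`P = A`), which preserves
skew-symmetry. Conjugating `(I, I, C)` therefore stays in the curvature subgroup, and its matrix
parts are `A I A⁻¹ = I`. Since `(A, A, 0) · (I, I, C) = (A, A, A C)`, the decomposition of
`(A, A, B)` is forced to be `(A, A, 0) · (I, I, A⁻¹ B)`. -/

open Matrix BigOperators

noncomputable section

/-- Membership in G₀ = {(A,A,0) : A invertible}. -/
def inG0 {m : ℕ} (x : PiEl m) : Prop :=
  IsUnit x.1 ∧ x.2.1 = x.1 ∧ ∀ i j k, x.2.2 i j k = 0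

/-- Membership in N = {(I,I,B) : B^i_{jk} + B^i_{kj} = 0}. -/
def inN {m : ℕ} (x : PiEl m) : Prop :=
  x.1 = 1 ∧ x.2.1 = 1 ∧ ∀ i j k, x.2.2 i j k + x.2.2 i k j = 0

section LowerSkew

variable {ι ι' κ κ' R : Type*}

def IsLowerSkew [Add R] [Zero R] (B : ι → κ → κ → R) : Prop :=
  ∀ i j k, B i j k + B i k j = 0

theorem IsLowerSkew.add [AddCommMonoid R] {B C : ι' → κ → κ → R} (hB : IsLowerSkew B)
    (hC : IsLowerSkew C) : IsLowerSkew fun i j k => B i j k + C i j k := fun i j k => by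
  rw [add_add_add_comm, hB, hC, add_zero]

theorem IsLowerSkew.neg [AddCommGroup R] {B : ι' → κ → κ → R} (hB : IsLowerSkew B) :
    IsLowerSkew fun i j k => -B i j k := fun i j k => by
  rw [← neg_add, hB, neg_zero]

theorem IsLowerSkew.mul_left [Fintype ι] [CommSemiring R] {B : ι → κ → κ → R}
    (hB : IsLowerSkew B) (M : Matrix ι' ι R) :
    IsLowerSkew fun i j k => ∑ h, M i h * B h j k := fun i j k => by
  simp only [← Finset.sum_add_distrib, ← mul_add, hB _ _ _, mul_zero, Finset.sum_const_zero]

theorem IsLowerSkew.pullback [Fintype κ] [CommSemiring R] {B : ι' → κ → κ → R}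
    (hB : IsLowerSkew B) (Q : Matrix κ κ' R) :
    IsLowerSkew fun i j k => ∑ h, ∑ l, B i h l * Q h j * Q l k := fun i j k => by
  have swap : ∑ h, ∑ l, B i h l * Q h k * Q l j = ∑ h, ∑ l, B i l h * Q h j * Q l k := by
    rw [Finset.sum_comm]
    exact Finset.sum_congr rfl fun h _ => Finset.sum_congr rfl fun l _ => by ring
  simp only [swap, ← Finset.sum_add_distrib, ← add_mul, hB _ _ _, zero_mul,
    Finset.sum_const_zero]

end LowerSkew

theorem Matrix.sum_mul_sum_mul_of_mul_eq_one {n R : Type*} [Fintype n] [DecidableEq n]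
    [Semiring R] {M N : Matrix n n R} (h : M * N = 1) (v : n → R) (i : n) :
    ∑ p, M i p * ∑ q, N p q * v q = v i := by
  simpa [Matrix.mulVec, dotProduct] using
    congrFun (show M *ᵥ (N *ᵥ v) = v by rw [Matrix.mulVec_mulVec, h, Matrix.one_mulVec]) i

section Curvature

variable {m : ℕ}

theorem curvEl_piMul {x y : PiEl m} (hx : curvEl x) (hy : curvEl y) : curvEl (piMul x y) := by
  obtain ⟨A, A', B⟩ := y
  obtain ⟨rfl : A = A', hB⟩ := hy
  exact ⟨by simp only [piMul, hx.1],
    (IsLowerSkew.pullback hx.2 A).add (IsLowerSkew.mul_left hB x.2.1)⟩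

theorem curvEl_piInv {x : PiEl m} (hx : curvEl x) : curvEl (piInv x) := by
  obtain ⟨A, A', B⟩ := x
  obtain ⟨rfl : A = A', hB⟩ := hx
  have hinv : (piInv (A, A, B)).2.2 =
      fun i j k => -∑ p, ∑ l, (∑ h, A⁻¹ i h * B h p l) * A⁻¹ p j * A⁻¹ l k := by
    funext i j k
    simp only [piInv, Finset.sum_mul, neg_inj]
    rw [Finset.sum_comm]
    exact Finset.sum_congr rfl fun p _ => Finset.sum_comm
  exact ⟨rfl, hinv ▸ ((IsLowerSkew.mul_left hB A⁻¹).pullback A⁻¹).neg⟩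

theorem inN.curvEl {x : PiEl m} (hx : inN x) : curvEl x :=
  ⟨hx.1.trans hx.2.1.symm, hx.2.2⟩

theorem inN_conj {g x : PiEl m} (hg : inPi g) (hgc : curvEl g) (hx : inN x) :
    inN (piMul (piMul g x) (piInv g)) := by
  have hc := curvEl_piMul (curvEl_piMul hgc hx.curvEl) (curvEl_piInv hgc)
  have hA : g.2.1 * g.2.1⁻¹ = 1 :=
    Matrix.mul_nonsing_inv _ (g.2.1.isUnit_iff_isUnit_det.mp hg.2)
  refine ⟨?_, ?_, hc.2⟩ <;> simp only [piMul, piInv, hx.1, hx.2.1, hgc.1, Matrix.mul_one, hA]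

theorem piMul_G0_N (A : Mat m) (C : Arr m) :
    piMul (A, A, fun _ _ _ => 0) (1, 1, C) = (A, A, fun i j k => ∑ h, A i h * C h j k) := by
  simp only [piMul, Matrix.mul_one, zero_mul, Finset.sum_const_zero, zero_add]

theorem eq_piOne_of_inG0_of_inN {x : PiEl m} (h₀ : inG0 x) (hN : inN x) : x = piOne m := by
  obtain ⟨P, A, B⟩ := x
  obtain ⟨rfl, rfl, -⟩ := hN
  simp only [piOne, Prod.mk.injEq, true_and]
  ext i j k
  exact h₀.2.2 i j k

theorem existsUnique_inG0_inN_piMul_eq {x : PiEl m} (hx : inPi x) (hxc : curvEl x) :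
    ∃! p : PiEl m × PiEl m, inG0 p.1 ∧ inN p.2 ∧ piMul p.1 p.2 = x := by
  obtain ⟨A, A', B⟩ := x
  obtain ⟨rfl : A = A', hB⟩ := hxc
  have hA : IsUnit A.det := A.isUnit_iff_isUnit_det.mp hx.1
  refine ⟨((A, A, fun _ _ _ => 0), (1, 1, fun i j k => ∑ h, A⁻¹ i h * B h j k)),
    ⟨⟨hx.1, rfl, fun _ _ _ => rfl⟩, ⟨rfl, rfl, IsLowerSkew.mul_left hB A⁻¹⟩, ?_⟩, ?_⟩
  · rw [piMul_G0_N]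
    simp only [Prod.mk.injEq, true_and]
    ext i j k
    exact Matrix.sum_mul_sum_mul_of_mul_eq_one (A.mul_nonsing_inv hA) (fun q => B q j k) i
  · rintro ⟨⟨P, P', B₁⟩, ⟨P₂, A₂, C⟩⟩
      ⟨⟨-, rfl : P' = P, hB₁⟩, ⟨rfl : P₂ = 1, rfl : A₂ = 1, -⟩, hmul⟩
    obtain rfl : B₁ = fun _ _ _ => 0 := by ext i j k; exact hB₁ i j k
    rw [piMul_G0_N, Prod.mk.injEq, Prod.mk.injEq] at hmul
    obtain ⟨rfl, -, rfl⟩ := hmul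
    simp only [Prod.mk.injEq, true_and]
    ext i j k
    exact (Matrix.sum_mul_sum_mul_of_mul_eq_one (Matrix.nonsing_inv_mul _ hA)
      (fun q => C q j k) i).symm

end Curvature

theorem stmt_8_general (m : ℕ) :
    (∀ g x : PiEl m, inPi g → curvEl g → inN x →
      inN (piMul (piMul g x) (piInv g))) ∧
    (∀ x : PiEl m, inG0 x → inN x → x = piOne m) ∧
    (∀ x : PiEl m, inPi x → curvEl x →
      ∃! p : PiEl m × PiEl m, inG0 p.1 ∧ inN p.2 ∧ piMul p.1 p.2 = x) :=
  ⟨fun _ _ => inN_conj, fun _ => eq_piOne_of_inG0_of_inN, fun _ => existsUnique_inG0_inN_piMul_eq⟩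

/-- the curvature subgroup L̃²_m is the internal semidirect product of
G₀ = {(A,A,0)} and N = {(I,I,B) : B antisymmetric}: N is normal in L̃²_m, G₀ ∩ N is
trivial, and every element of L̃²_m is uniquely a product g₀ · n with g₀ ∈ G₀, n ∈ N. -/
theorem stmt_8 (m : ℕ) (hm : 1 ≤ m) :
    (∀ g x : PiEl m, inPi g → curvEl g → inN x →
      inN (piMul (piMul g x) (piInv g))) ∧
    (∀ x : PiEl m, inG0 x → inN x → x = piOne m) ∧
    (∀ x : PiEl m, inPi x → curvEl x →
      ∃! p : PiEl m × PiEl m, inG0 p.1 ∧ inN p.2 ∧ piMul p.1 p.2 = x) :=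
  stmt_8_general m
end
end

section
/- The right action of Π_m on V_{m,n} is free on the set of triples (U,W,C) in which both n×m matrices U and W have rank m: if U and W have rank m and (U,W,C)·(P,A,B) = (U,W,C), then P = I, A = I and B = 0. -/
open Matrix BigOperators

noncomputable section

/-- Rectangular n×m real matrices. -/
abbrev RMat (m n : ℕ) := Matrix (Fin n) (Fin m) ℝ

/-- Arrays C^a_{ij}, a ∈ Fin n, i j ∈ Fin m. -/
abbrev CArr (m n : ℕ) := Fin n → Fin m → Fin m → ℝ

/-- Underlying data (U, W, C) of an element of V_{m,n}. -/
abbrev VEl (m n : ℕ) := RMat m n × RMat m n × CArr m n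

/-- The right action of Π_m on V_{m,n}:
`(U,W,C)·(P,A,B) = (UA, WP, C')` with
`C'^a_{ij} = Σ_{h,k} C^a_{hk} A^h_i P^k_j + Σ_h U^a_h B^h_{ij}`. -/
def vact {m n : ℕ} (v : VEl m n) (g : PiEl m) : VEl m n :=
  (v.1 * g.2.1, v.2.1 * g.1,
    fun a i j => (∑ h, ∑ k, v.2.2 a h k * g.2.1 h i * g.1 k j) + ∑ h, v.1 a h * g.2.2 h i j)

/-!
Full column rank makes `X ↦ U * X` injective. Hence `U * A = U` and `W * P = W` force
`A = 1` and `P = 1`; the `C`-component of the fixed-point equation then reduces to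
`U * B_{·jk} = 0` for every `j, k`, so `B = 0` by the same injectivity.
-/

namespace Matrix

variable {R l m n : Type*} [CommRing R] [Nontrivial R] [Fintype m]

theorem mulVec_injective_of_rank_eq_card {U : Matrix n m R} (hU : U.rank = Fintype.card m) :
    Function.Injective U.mulVec := by
  rw [mulVec_injective_iff, linearIndependent_iff_card_eq_finrank_span, ← hU,
    rank_eq_finrank_span_cols, Set.finrank]

theorem mul_right_injective_of_rank_eq_card {U : Matrix n m R} (hU : U.rank = Fintype.card m) :
    Function.Injective (fun X : Matrix m l R => U * X) := fun _ _ hXY =>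
  ext_col fun j => mulVec_injective_of_rank_eq_card hU congr(($hXY).col j)

end Matrix

theorem vact_one_one {m n : ℕ} (v : VEl m n) (B : Arr m) :
    vact v (1, 1, B) = (v.1, v.2.1, fun a i j => v.2.2 a i j + (v.1 *ᵥ fun h => B h i j) a) := by
  simp [vact, one_apply, mulVec, dotProduct]

theorem stmt_10_general (m n : ℕ)
    (U W : RMat m n) (C : CArr m n) (hU : U.rank = m) (hW : W.rank = m)
    (P A : Mat m) (B : Arr m)
    (hfix : vact (U, W, C) (P, A, B) = (U, W, C)) :
    P = 1 ∧ A = 1 ∧ ∀ i j k, B i j k = 0 := by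
  replace hU := hU.trans (Fintype.card_fin m).symm
  replace hW := hW.trans (Fintype.card_fin m).symm
  have hUA : U * A = U * (1 : Mat m) := by rw [Matrix.mul_one]; exact congrArg Prod.fst hfix
  have hWP : W * P = W * (1 : Mat m) := by rw [Matrix.mul_one]; exact congrArg (·.2.1) hfix
  obtain rfl : A = 1 := Matrix.mul_right_injective_of_rank_eq_card hU hUA
  obtain rfl : P = 1 := Matrix.mul_right_injective_of_rank_eq_card hW hWP
  refine ⟨rfl, rfl, fun i j k => ?_⟩
  have hC := congrArg (fun v => v.2.2) hfix
  simp only [vact_one_one, funext_iff, add_eq_left] at hC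
  have hB : (U *ᵥ fun h => B h j k) = U *ᵥ 0 := by
    rw [mulVec_zero]
    exact funext fun a => hC a j k
  exact congrFun (Matrix.mulVec_injective_of_rank_eq_card hU hB) i

/-- the right action of Π_m on V_{m,n} is free on the set of triples
(U,W,C) where both U and W have rank m. -/
theorem stmt_10 (m n : ℕ) (hm : 1 ≤ m) (hmn : m ≤ n)
    (U W : RMat m n) (C : CArr m n) (hU : U.rank = m) (hW : W.rank = m)
    (P A : Mat m) (B : Arr m) (hP : IsUnit P) (hA : IsUnit A)
    (hfix : vact (U, W, C) (P, A, B) = (U, W, C)) :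
    P = 1 ∧ A = 1 ∧ ∀ i j k, B i j k = 0 :=
  stmt_10_general m n U W C hU hW P A B hfix
end
end

section
/- The right action of the semiholonomic subgroup L̂²_m on V_{m,n} is free on the set of triples whose first matrix has rank m: if the n×m matrix U has rank m and (A,A,B) ∈ L̂²_m satisfies (U,W,C)·(A,A,B) = (U,W,C), then A = I and B = 0. -/
open Matrix BigOperators

noncomputable section

theorem Matrix.mulVec_injective_of_rank_eq_card_s11 {K m n : Type*} [Field K] [Fintype m]
    {U : Matrix n m K} (hU : U.rank = Fintype.card m) : Function.Injective U.mulVec := by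
  rw [mulVec_injective_iff, linearIndependent_iff_card_eq_finrank_span, ← hU,
    rank_eq_finrank_span_cols]
  rfl

theorem Matrix.eq_of_mul_eq_mul_of_mulVec_injective {R l m n : Type*} [CommSemiring R]
    [Fintype m] [Fintype l] [DecidableEq l] {U : Matrix n m R} (hU : Function.Injective U.mulVec)
    {A A' : Matrix m l R} (h : U * A = U * A') : A = A' :=
  ext_of_mulVec_single fun _ => hU <| by rw [mulVec_mulVec, mulVec_mulVec, h]

theorem stmt_11_general (m n : ℕ)
    (U W : RMat m n) (C : CArr m n) (hU : U.rank = m)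
    (A : Mat m) (B : Arr m)
    (hfix : vact (U, W, C) (A, A, B) = (U, W, C)) :
    A = 1 ∧ ∀ i j k, B i j k = 0 := by
  have hinj : Function.Injective U.mulVec :=
    mulVec_injective_of_rank_eq_card_s11 (hU.trans (Fintype.card_fin m).symm)
  obtain rfl : A = 1 :=
    eq_of_mul_eq_mul_of_mulVec_injective hinj <|
      (congrArg Prod.fst hfix).trans (Matrix.mul_one U).symm
  refine ⟨rfl, fun i j k => ?_⟩
  have hB : U *ᵥ (fun h => B h j k) = U *ᵥ 0 := by
    rw [mulVec_zero]
    funext a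
    simpa [vact_one_one] using congrFun (congrFun (congrFun (congrArg (·.2.2) hfix) a) j) k
  exact congrFun (hinj hB) i

/-- the right action of the semiholonomic subgroup L̂²_m on V_{m,n} is
free on the set of triples whose first matrix has rank m. -/
theorem stmt_11 (m n : ℕ) (hm : 1 ≤ m) (hmn : m ≤ n)
    (U W : RMat m n) (C : CArr m n) (hU : U.rank = m)
    (A : Mat m) (B : Arr m) (hA : IsUnit A)
    (hfix : vact (U, W, C) (A, A, B) = (U, W, C)) :
    A = 1 ∧ ∀ i j k, B i j k = 0 :=
  stmt_11_general m n U W C hU A B hfix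
end
end

section
/- An element g = (P,A,B) ∈ Π_m maps holonomic regular triples to holonomic triples if and only if g belongs to the holonomic subgroup; more precisely: (i) if P = A and B^i_{jk} = B^i_{kj} for all i,j,k, then for every triple (U,U,C) with C^a_{ij} = C^a_{ji} the image (U,U,C)·g is again of the form (U',U',C') with C'^a_{ij} = C'^a_{ji}; and (ii) if there exists at least one triple (U,U,C) with U of rank m and C^a_{ij} = C^a_{ji} whose image (U,U,C)·g is of the form (U',U',C') with C'^a_{ij} = C'^a_{ji}, then P = A and B^i_{jk} = B^i_{kj} for all i,j,k. -/
open Matrix BigOperators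

noncomputable section

/-!
For a semiholonomic triple `(U, U, C)` and `P = A`, the third component of the image is
`C'^a = Aᵀ C^a A + U B`, whose first summand is symmetric as soon as `C^a` is; so the image is
holonomic exactly when `Σ_h U^a_h B^h_{ij}` is symmetric in `i, j`. A matrix `U` of full column
rank is left cancellable, which turns `U A = U P` into `A = P` and the symmetry of `U B` into the
symmetry of `B`.
-/

section FullColumnRank

variable {ι κ K : Type*} [Fintype κ] [Field K] {U : Matrix ι κ K}

theorem Matrix.mulVec_injective_of_rank_eq_card_s13 (hU : U.rank = Fintype.card κ) :
    Function.Injective U.mulVec := by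
  have hdim := LinearMap.finrank_range_add_finrank_ker U.mulVecLin
  rw [Module.finrank_fintype_fun_eq_card] at hdim
  have hker : LinearMap.ker U.mulVecLin = ⊥ :=
    Submodule.finrank_eq_zero.mp (by rw [← rank] at hdim; omega)
  exact LinearMap.ker_eq_bot.mp hker

theorem Matrix.mul_left_cancel_of_rank_eq_card {o : Type*} [Fintype o]
    (hU : U.rank = Fintype.card κ) {X Y : Matrix κ o K} (h : U * X = U * Y) : X = Y :=
  mulVec_injective <| funext fun v =>
    mulVec_injective_of_rank_eq_card_s13 hU (by rw [mulVec_mulVec, mulVec_mulVec, h])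

end FullColumnRank

theorem sum_sum_mul_mul_comm_of_symm {ι R : Type*} [Fintype ι] [CommSemiring R]
    {C : ι → ι → R} (hC : ∀ h k, C h k = C k h) (A : Matrix ι ι R) (i j : ι) :
    ∑ h, ∑ k, C h k * A h i * A k j = ∑ h, ∑ k, C h k * A h j * A k i := by
  rw [Finset.sum_comm]
  refine Finset.sum_congr rfl fun h _ => Finset.sum_congr rfl fun k _ => ?_
  rw [hC k h]
  ring

theorem vact_snd_snd_symm_iff {m n : ℕ} {U : RMat m n} {C : CArr m n}
    (hC : ∀ a i j, C a i j = C a j i) (A : Mat m) (B : Arr m) (a : Fin n) (i j : Fin m) :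
    (vact (U, U, C) (A, A, B)).2.2 a i j = (vact (U, U, C) (A, A, B)).2.2 a j i ↔
      (U *ᵥ fun h => B h i j) a = (U *ᵥ fun h => B h j i) a := by
  simp only [vact, mulVec, dotProduct]
  rw [sum_sum_mul_mul_comm_of_symm (hC a)]
  exact add_right_inj _

theorem stmt_13_general (m n : ℕ)
    (P A : Mat m) (B : Arr m) :
    ((P = A ∧ ∀ i j k, B i j k = B i k j) →
      ∀ (U : RMat m n) (C : CArr m n), (∀ a i j, C a i j = C a j i) →
        (vact (U, U, C) (P, A, B)).1 = (vact (U, U, C) (P, A, B)).2.1 ∧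
        (∀ a i j, (vact (U, U, C) (P, A, B)).2.2 a i j
                = (vact (U, U, C) (P, A, B)).2.2 a j i)) ∧
    ((∃ (U : RMat m n) (C : CArr m n), U.rank = m ∧ (∀ a i j, C a i j = C a j i) ∧
        (vact (U, U, C) (P, A, B)).1 = (vact (U, U, C) (P, A, B)).2.1 ∧
        (∀ a i j, (vact (U, U, C) (P, A, B)).2.2 a i j
                = (vact (U, U, C) (P, A, B)).2.2 a j i)) →
      P = A ∧ ∀ i j k, B i j k = B i k j) := by
  constructor
  · rintro ⟨rfl, hB⟩ U C hC
    refine ⟨rfl, fun a i j => (vact_snd_snd_symm_iff hC P B a i j).2 ?_⟩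
    rw [show (fun h => B h i j) = fun h => B h j i from funext fun h => hB h i j]
  · rintro ⟨U, C, hU, hC, hfst, hsym⟩
    have hU' : U.rank = Fintype.card (Fin m) := hU.trans (Fintype.card_fin m).symm
    obtain rfl : P = A := (mul_left_cancel_of_rank_eq_card hU' hfst).symm
    refine ⟨rfl, fun i j k => ?_⟩
    have hUB : (U *ᵥ fun h => B h j k) = U *ᵥ fun h => B h k j :=
      funext fun a => (vact_snd_snd_symm_iff hC P B a j k).1 (hsym a j k)
    exact congrFun (mulVec_injective_of_rank_eq_card_s13 hU' hUB) i

/-- an element g = (P,A,B) ∈ Π_m maps holonomic regular triples to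
holonomic triples iff g is holonomic: (i) if P = A and B is symmetric then the
image of any (U,U,C) with C symmetric is again semiholonomic with symmetric third
component; (ii) if this holds for at least one such triple with U of rank m, then
P = A and B is symmetric. -/
theorem stmt_13 (m n : ℕ) (hm : 1 ≤ m) (hmn : m ≤ n)
    (P A : Mat m) (B : Arr m) (hP : IsUnit P) (hA : IsUnit A) :
    ((P = A ∧ ∀ i j k, B i j k = B i k j) →
      ∀ (U : RMat m n) (C : CArr m n), (∀ a i j, C a i j = C a j i) →
        (vact (U, U, C) (P, A, B)).1 = (vact (U, U, C) (P, A, B)).2.1 ∧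
        (∀ a i j, (vact (U, U, C) (P, A, B)).2.2 a i j
                = (vact (U, U, C) (P, A, B)).2.2 a j i)) ∧
    ((∃ (U : RMat m n) (C : CArr m n), U.rank = m ∧ (∀ a i j, C a i j = C a j i) ∧
        (vact (U, U, C) (P, A, B)).1 = (vact (U, U, C) (P, A, B)).2.1 ∧
        (∀ a i j, (vact (U, U, C) (P, A, B)).2.2 a i j
                = (vact (U, U, C) (P, A, B)).2.2 a j i)) →
      P = A ∧ ∀ i j k, B i j k = B i k j) :=
  stmt_13_general m n P A B
end
end

section
/- The quotient coordinates v are invariant under the semiholonomic action: let n > m, let U be an n×m real matrix whose top m×m block Q is invertible, let C : Fin n → Fin m → Fin m → ℝ, and let (A,A,B) ∈ L̂²_m. If (U', 0, C') = (U, 0, C)·(A,A,B), then the top m×m block Q' of U' = UA is again invertible and v^α_{ij}(U', C') = v^α_{ij}(U, C) for all α ∈ {m+1,…,n} and all i,j. -/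
open Matrix BigOperators

noncomputable section

/-- The top m×m block Q of an n×m matrix U (rows 1,…,m). -/
def topBlock {m n : ℕ} (hmn : m ≤ n) (U : RMat m n) : Mat m :=
  fun i j => U (Fin.castLE hmn i) j

/-- The quotient coordinates: with r = Q⁻¹ the inverse of the top block of U,
`v^α_{ij}(U,C) = Σ_{h,k} C^α_{hk} r^h_i r^k_j
              − Σ_{h,k,p,q} U^α_h r^h_k C^k_{pq} r^p_i r^q_j`. -/
def vcoord {m n : ℕ} (hmn : m ≤ n) (U : RMat m n) (C : CArr m n)
    (α : Fin n) (i j : Fin m) : ℝ :=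
  (∑ h, ∑ k, C α h k * (topBlock hmn U)⁻¹ h i * (topBlock hmn U)⁻¹ k j) -
    ∑ h, ∑ k, ∑ p, ∑ q, U α h * (topBlock hmn U)⁻¹ h k *
      C (Fin.castLE hmn k) p q * (topBlock hmn U)⁻¹ p i * (topBlock hmn U)⁻¹ q j

/-! With `r = Q⁻¹`, the coordinates `v_{ij}` form the vector `c - (U r) c_top`, where
`c^a = (rᵀ C^a r)_{ij}` and `c_top` is its restriction to the first `m` indices. Acting by
`(A, A, B)` replaces `r` by `A⁻¹ r`, so `U r` is unchanged, and it replaces `c` by `c + U e`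
with `e^h = ((A⁻¹ r)ᵀ B^h (A⁻¹ r))_{ij}`. The shift `U e` cancels, since its top part is `Q e`
and `U r Q e = U e`. -/
theorem topBlock_mul {m n : ℕ} (hmn : m ≤ n) (U : RMat m n) (A : Mat m) :
    topBlock hmn (U * A) = topBlock hmn U * A := rfl

theorem topBlock_mulVec {m n : ℕ} (hmn : m ≤ n) (U : RMat m n) (e : Fin m → ℝ) :
    (U *ᵥ e) ∘ Fin.castLE hmn = topBlock hmn U *ᵥ e := rfl

def contract {ι : Type*} {m : ℕ} (C : ι → Fin m → Fin m → ℝ) (X Y : Mat m) (i j : Fin m) :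
    ι → ℝ :=
  fun a => ∑ h, ∑ k, C a h k * X h i * Y k j

theorem contract_apply_eq_mul {ι : Type*} {m : ℕ} (C : ι → Fin m → Fin m → ℝ) (X Y : Mat m)
    (i j : Fin m) (a : ι) :
    contract C X Y i j a = (Xᵀ * of (C a) * Y) i j := by
  simp only [contract, Matrix.mul_apply, Matrix.transpose_apply, of_apply, Finset.sum_mul]
  rw [Finset.sum_comm]
  exact Finset.sum_congr rfl fun _ _ => Finset.sum_congr rfl fun _ _ => by ring

theorem of_vact_snd_snd {m n : ℕ} (U W : RMat m n) (C : CArr m n) (P A : Mat m) (B : Arr m)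
    (a : Fin n) :
    of ((vact (U, W, C) (P, A, B)).2.2 a) = Aᵀ * of (C a) * P + ∑ h, U a h • of (B h) := by
  ext i j
  rw [Matrix.add_apply, ← contract_apply_eq_mul]
  simp [vact, contract, Matrix.sum_apply]

theorem contract_vact {m n : ℕ} (U W : RMat m n) (C : CArr m n) (P A : Mat m) (B : Arr m)
    (X Y : Mat m) (i j : Fin m) :
    contract (vact (U, W, C) (P, A, B)).2.2 X Y i j =
      contract C (A * X) (P * Y) i j + U *ᵥ contract B X Y i j := by
  ext a
  simp only [contract_apply_eq_mul, of_vact_snd_snd, Pi.add_apply, mulVec, dotProduct,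
    Matrix.mul_add, Matrix.add_mul, Matrix.transpose_mul, Matrix.mul_assoc, Matrix.add_apply,
    Finset.mul_sum, Finset.sum_mul, Matrix.mul_smul, Matrix.smul_mul, Matrix.sum_apply,
    Matrix.smul_apply, smul_eq_mul]

def quotCoord {m n : ℕ} (hmn : m ≤ n) (U : RMat m n) (c : Fin n → ℝ) : Fin n → ℝ :=
  c - (U * (topBlock hmn U)⁻¹) *ᵥ (c ∘ Fin.castLE hmn)

theorem vcoord_eq_quotCoord {m n : ℕ} (hmn : m ≤ n) (U : RMat m n) (C : CArr m n)
    (α : Fin n) (i j : Fin m) :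
    vcoord hmn U C α i j =
      quotCoord hmn U (contract C (topBlock hmn U)⁻¹ (topBlock hmn U)⁻¹ i j) α := by
  simp only [vcoord, quotCoord, Pi.sub_apply, Function.comp_apply, contract, mulVec,
    dotProduct, Matrix.mul_apply]
  congr 1
  rw [Finset.sum_comm]
  refine Finset.sum_congr rfl fun k _ => ?_
  rw [Finset.sum_mul]
  simp only [Finset.mul_sum]
  exact Finset.sum_congr rfl fun _ _ => Finset.sum_congr rfl fun _ _ =>
    Finset.sum_congr rfl fun _ _ => by ring

theorem quotCoord_add_mulVec {m n : ℕ} (hmn : m ≤ n) (U : RMat m n)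
    (hQ : IsUnit (topBlock hmn U)) (c : Fin n → ℝ) (e : Fin m → ℝ) :
    quotCoord hmn U (c + U *ᵥ e) = quotCoord hmn U c := by
  have hQQ : (topBlock hmn U)⁻¹ * topBlock hmn U = 1 :=
    Matrix.nonsing_inv_mul _ ((Matrix.isUnit_iff_isUnit_det _).mp hQ)
  rw [quotCoord, quotCoord, Pi.add_comp, topBlock_mulVec, mulVec_add, mulVec_mulVec,
    Matrix.mul_assoc, hQQ, Matrix.mul_one]
  abel

theorem quotCoord_mul {m n : ℕ} (hmn : m ≤ n) (U : RMat m n) (A : Mat m) (hA : IsUnit A)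
    (c : Fin n → ℝ) :
    quotCoord hmn (U * A) c = quotCoord hmn U c := by
  rw [quotCoord, quotCoord, topBlock_mul, Matrix.mul_inv_rev, ← Matrix.mul_assoc,
    Matrix.mul_nonsing_inv_cancel_right A U ((Matrix.isUnit_iff_isUnit_det A).mp hA)]

theorem stmt_15_general (m n : ℕ) (hmn : m < n)
    (U : RMat m n) (C : CArr m n) (hQ : IsUnit (topBlock hmn.le U))
    (A : Mat m) (B : Arr m) (hA : IsUnit A) :
    IsUnit (topBlock hmn.le (vact (U, 0, C) (A, A, B)).1) ∧
    ∀ α : Fin n, m ≤ (α : ℕ) → ∀ i j : Fin m,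
      vcoord hmn.le (vact (U, 0, C) (A, A, B)).1 (vact (U, 0, C) (A, A, B)).2.2 α i j
        = vcoord hmn.le U C α i j := by
  have hU' : (vact (U, 0, C) (A, A, B)).1 = U * A := rfl
  refine ⟨by rw [hU', topBlock_mul]; exact hQ.mul hA, fun α _ i j => ?_⟩
  have hdetA : IsUnit A.det := (Matrix.isUnit_iff_isUnit_det A).mp hA
  rw [vcoord_eq_quotCoord, vcoord_eq_quotCoord, hU', topBlock_mul, Matrix.mul_inv_rev,
    contract_vact, Matrix.mul_nonsing_inv_cancel_left A _ hdetA,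
    quotCoord_mul hmn.le U A hA, quotCoord_add_mulVec hmn.le U hQ]

/-- the quotient coordinates v are invariant under the semiholonomic
action: if U has invertible top block and (U',0,C') = (U,0,C)·(A,A,B) with
(A,A,B) ∈ L̂²_m, then U' has invertible top block and
v^α_{ij}(U',C') = v^α_{ij}(U,C) for all α ∈ {m+1,…,n} and all i,j. -/
theorem stmt_15 (m n : ℕ) (hm : 1 ≤ m) (hmn : m < n)
    (U : RMat m n) (C : CArr m n) (hQ : IsUnit (topBlock hmn.le U))
    (A : Mat m) (B : Arr m) (hA : IsUnit A) :
    IsUnit (topBlock hmn.le (vact (U, 0, C) (A, A, B)).1) ∧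
    ∀ α : Fin n, m ≤ (α : ℕ) → ∀ i j : Fin m,
      vcoord hmn.le (vact (U, 0, C) (A, A, B)).1 (vact (U, 0, C) (A, A, B)).2.2 α i j
        = vcoord hmn.le U C α i j :=
  stmt_15_general m n hmn U C hQ A B hA
end
end
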